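/- arXiv:2512.12231 — 4 statements merged into one kernel-verified Lean document; each statement's English description precedes it below -/
import Mathlib

section
/- For every integer n ≥ 1, the path P_n on n vertices is well-ve-dominated if and only if n ∈ {1, 2, 3, 6}. (In particular, P_4 and P_5 are not well-ve-dominated, and no path on 7 or more vertices is well-ve-dominated.) -/
open SimpleGraph

/-- A vertex `v` ve-dominates an edge `e` if at least one endpoint of `e`
lies in the closed neighborhood `N[v]` of `v`. -/
def VEDominates {V : Type*} (G : SimpleGraph V) (v : V) (e : Sym2 V) : Prop :=
  ∃ x ∈ e, x = v ∨ G.Adj v x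

/-- `D` is a ve-dominating set of `G`: every edge of `G` is ve-dominated
by some vertex of `D`. -/
def IsVEDomSet {V : Type*} (G : SimpleGraph V) (D : Set V) : Prop :=
  ∀ e ∈ G.edgeSet, ∃ v ∈ D, VEDominates G v e

/-- `D` is a minimal ve-dominating set of `G`: it is ve-dominating and no
proper subset of `D` is ve-dominating. -/
def IsMinimalVEDomSet {V : Type*} (G : SimpleGraph V) (D : Set V) : Prop :=
  IsVEDomSet G D ∧ ∀ D' : Set V, D' ⊂ D → ¬ IsVEDomSet G D'

/-- `G` is well-ve-dominated: all minimal ve-dominating sets have the same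
cardinality. -/
def WellVEDominated {V : Type*} (G : SimpleGraph V) : Prop :=
  ∀ D₁ D₂ : Set V, IsMinimalVEDomSet G D₁ → IsMinimalVEDomSet G D₂ →
    D₁.ncard = D₂.ncard

/-- `γ_ve(G)`: the minimum cardinality of a ve-dominating set of `G`. -/
noncomputable def gammaVE {V : Type*} (G : SimpleGraph V) : ℕ :=
  sInf {n | ∃ D : Set V, IsVEDomSet G D ∧ D.ncard = n}

/-- `G` is reduced: no two distinct vertices share the same open neighborhood. -/
def Reduced {V : Type*} (G : SimpleGraph V) : Prop :=
  ∀ x y : V, G.neighborSet x = G.neighborSet y → x = y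

/-- `s l` form a good pendant edge of `G`: `l` is a leaf (degree 1) and its
support vertex `s` has degree 2. -/
def IsGoodPendant {V : Type*} (G : SimpleGraph V) (s l : V) : Prop :=
  G.Adj s l ∧ (G.neighborSet l).ncard = 1 ∧ (G.neighborSet s).ncard = 2

/-- `L_T`: the leaf endpoints of the good pendant edges. -/
def goodLeaves {V : Type*} (G : SimpleGraph V) : Set V :=
  {l | ∃ s, IsGoodPendant G s l}

/-- `S_T`: the support vertices of the good pendant edges. -/
def goodSupports {V : Type*} (G : SimpleGraph V) : Set V :=
  {s | ∃ l, IsGoodPendant G s l}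

/-- `W_T = N(S_T) \ L_T`: non-leaf neighbors of support vertices of good
pendant edges. -/
def goodW {V : Type*} (G : SimpleGraph V) : Set V :=
  {v | ∃ s ∈ goodSupports G, G.Adj v s} \ goodLeaves G

/-- The set of good pendant edges of `G`. -/
def goodPendantEdges {V : Type*} (G : SimpleGraph V) : Set (Sym2 V) :=
  {e | ∃ s l, IsGoodPendant G s l ∧ e = s(s, l)}

/-! A ve-dominating set is minimal iff each of its vertices has a private edge, one that no other
vertex of the set ve-dominates. In `P_n` a vertex `v` ve-dominates the edge `{x, x + 1}` iff
`x - 1 ≤ v ≤ x + 2`. For `n ≥ 4` this yields two minimal ve-dominating sets: the vertices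
`0, 3, 6, …` of size `⌊(n - 1) / 3⌋ + 1`, and the vertices `2, 6, 10, …` completed by `n - 3`, of
size `⌊(n - 2) / 4⌋ + 1`; the sizes differ unless `n = 6`. For `n ∈ {1, 2, 3, 6}` the minimal
ve-dominating sets are enumerated by a finite check. -/

section VEDomination

variable {V : Type*} {G : SimpleGraph V}

theorem IsVEDomSet.mono {D D' : Set V} (hD : IsVEDomSet G D) (h : D ⊆ D') :
    IsVEDomSet G D' := fun e he =>
  let ⟨v, hv, hve⟩ := hD e he
  ⟨v, h hv, hve⟩

theorem isMinimalVEDomSet_iff_minimal (D : Set V) :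
    IsMinimalVEDomSet G D ↔ Minimal (IsVEDomSet G) D := by
  rw [minimal_iff_forall_lt]
  rfl

theorem isMinimalVEDomSet_iff_forall_exists_private (D : Set V) :
    IsMinimalVEDomSet G D ↔ IsVEDomSet G D ∧
      ∀ v ∈ D, ∃ e ∈ G.edgeSet, ∀ u ∈ D, VEDominates G u e → u = v := by
  rw [isMinimalVEDomSet_iff_minimal,
    Set.minimal_iff_forall_sdiff_singleton fun _ _ h hst => h.mono hst]
  simp only [IsVEDomSet, Set.mem_sdiff, Set.mem_singleton_iff, not_forall, not_exists, not_and,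
    exists_prop, and_imp, not_imp_not]

theorem wellVEDominated_of_forall_card_eq [Finite V] (c : ℕ)
    (h : ∀ S : Finset V, IsMinimalVEDomSet G ↑S → S.card = c) : WellVEDominated G := by
  suffices ∀ D : Set V, IsMinimalVEDomSet G D → D.ncard = c from
    fun D₁ D₂ h₁ h₂ => (this D₁ h₁).trans (this D₂ h₂).symm
  intro D hD
  obtain ⟨S, rfl⟩ : ∃ S : Finset V, ↑S = D := ⟨_, D.toFinite.coe_toFinset⟩
  rw [Set.ncard_coe_finset]
  exact h S hD

end VEDomination

section Path

variable {n : ℕ}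

theorem forall_edgeSet_pathGraph {P : Sym2 (Fin n) → Prop} :
    (∀ e ∈ (pathGraph n).edgeSet, P e) ↔
      ∀ x (h : x < n - 1), P s(⟨x, by omega⟩, ⟨x + 1, by omega⟩) := by
  refine ⟨fun hP x h => hP _ (by simp [pathGraph_adj]), fun hP e he => ?_⟩
  induction e using Sym2.ind with
  | _ a b =>
  rcases pathGraph_adj.1 he with hab | hba
  · obtain ⟨a, _⟩ := a; obtain ⟨b, _⟩ := b
    simp only at hab; subst hab
    exact hP a (by omega)
  · obtain ⟨a, _⟩ := a; obtain ⟨b, _⟩ := b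
    simp only at hba; subst hba
    rw [Sym2.eq_swap]
    exact hP b (by omega)

theorem exists_edgeSet_pathGraph {P : Sym2 (Fin n) → Prop} :
    (∃ e ∈ (pathGraph n).edgeSet, P e) ↔
      ∃ x, ∃ h : x < n - 1, P s(⟨x, by omega⟩, ⟨x + 1, by omega⟩) := by
  simpa using (forall_edgeSet_pathGraph (P := fun e => ¬ P e)).not

theorem veDominates_pathGraph_iff {v : Fin n} {x : ℕ} (h : x < n) (h' : x + 1 < n) :
    VEDominates (pathGraph n) v s(⟨x, h⟩, ⟨x + 1, h'⟩) ↔ (v : ℕ) ≤ x + 2 ∧ x ≤ v + 1 := by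
  simp only [VEDominates, Sym2.mem_iff, exists_eq_or_imp, exists_eq_left, pathGraph_adj]
  simp only [Fin.ext_iff]
  omega

theorem isMinimalVEDomSet_pathGraph_iff (D : Set (Fin n)) :
    IsMinimalVEDomSet (pathGraph n) D ↔
      (∀ x < n - 1, ∃ v ∈ D, (v : ℕ) ≤ x + 2 ∧ x ≤ v + 1) ∧
      ∀ v ∈ D, ∃ x < n - 1, ∀ u ∈ D, (u : ℕ) ≤ x + 2 → x ≤ u + 1 → u = v := by
  simp only [isMinimalVEDomSet_iff_forall_exists_private, IsVEDomSet, forall_edgeSet_pathGraph,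
    exists_edgeSet_pathGraph, veDominates_pathGraph_iff, exists_prop, and_imp]

theorem wellVEDominated_pathGraph_of_card_eq (c : ℕ)
    (h : ∀ S : Finset (Fin n), (∀ x < n - 1, ∃ v ∈ S, (v : ℕ) ≤ x + 2 ∧ x ≤ v + 1) →
      (∀ v ∈ S, ∃ x < n - 1, ∀ u ∈ S, (u : ℕ) ≤ x + 2 → x ≤ u + 1 → u = v) → S.card = c) :
    WellVEDominated (pathGraph n) :=
  wellVEDominated_of_forall_card_eq c fun S hS => by
    rw [isMinimalVEDomSet_pathGraph_iff] at hS
    simp only [Finset.mem_coe] at hS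
    exact h S hS.1 hS.2

theorem isMinimalVEDomSet_pathGraph_preimage {S : Finset ℕ} (hS : ∀ v ∈ S, v < n)
    (hdom : ∀ x < n - 1, ∃ v ∈ S, v ≤ x + 2 ∧ x ≤ v + 1)
    (hpriv : ∀ v ∈ S, ∃ x < n - 1, ∀ u ∈ S, u ≤ x + 2 → x ≤ u + 1 → u = v) :
    IsMinimalVEDomSet (pathGraph n) (Fin.val ⁻¹' ↑S) := by
  rw [isMinimalVEDomSet_pathGraph_iff]
  refine ⟨fun x hx => ?_, fun v hv => ?_⟩
  · obtain ⟨v, hv, hcov⟩ := hdom x hx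
    exact ⟨⟨v, hS v hv⟩, hv, hcov⟩
  · obtain ⟨x, hx, hu⟩ := hpriv v hv
    exact ⟨x, hx, fun u hu' h₁ h₂ => Fin.ext (hu u hu' h₁ h₂)⟩

theorem ncard_preimage_val {S : Finset ℕ} (hS : ∀ v ∈ S, v < n) :
    (Fin.val ⁻¹' (S : Set ℕ) : Set (Fin n)).ncard = S.card := by
  rw [Set.ncard_preimage_of_injective_subset_range Fin.val_injective, Set.ncard_coe_finset]
  simpa [Fin.range_val, Set.subset_def] using hS

def everyThirdVertex (n : ℕ) : Finset ℕ :=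
  (Finset.range ((n - 1) / 3 + 1)).image (3 * ·)

def everyFourthVertex (n : ℕ) : Finset ℕ :=
  (Finset.range ((n - 2) / 4)).image (4 * · + 2) ∪ {n - 3}

theorem mem_everyThirdVertex {a : ℕ} : a ∈ everyThirdVertex n ↔ ∃ i ≤ (n - 1) / 3, 3 * i = a := by
  simp [everyThirdVertex]

theorem mem_everyFourthVertex {a : ℕ} :
    a ∈ everyFourthVertex n ↔ (∃ i < (n - 2) / 4, 4 * i + 2 = a) ∨ a = n - 3 := by
  simp [everyFourthVertex, or_comm]

theorem card_everyThirdVertex : (everyThirdVertex n).card = (n - 1) / 3 + 1 := by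
  rw [everyThirdVertex, Finset.card_image_of_injective _ fun a b h => by simpa using h,
    Finset.card_range]

theorem card_everyFourthVertex : (everyFourthVertex n).card = (n - 2) / 4 + 1 := by
  rw [everyFourthVertex, Finset.card_union_of_disjoint, Finset.card_image_of_injective,
    Finset.card_range, Finset.card_singleton]
  · intro a b h
    simp only at h
    omega
  · simp only [Finset.disjoint_singleton_right, Finset.mem_image, Finset.mem_range, not_exists,
      not_and]
    omega

theorem isMinimalVEDomSet_everyThirdVertex (hn : 2 ≤ n) :
    IsMinimalVEDomSet (pathGraph n) (Fin.val ⁻¹' ↑(everyThirdVertex n)) := by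
  apply isMinimalVEDomSet_pathGraph_preimage
  · simp only [mem_everyThirdVertex]
    omega
  · intro x hx
    exact ⟨3 * ((x + 1) / 3), mem_everyThirdVertex.2 ⟨_, by omega, rfl⟩, by omega, by omega⟩
  · simp only [mem_everyThirdVertex]
    rintro _ ⟨i, hi, rfl⟩
    -- for `i = 0` the truncated `3 * 0 - 1 = 0` picks the edge `{0, 1}`
    refine ⟨3 * i - 1, by omega, ?_⟩
    rintro _ ⟨j, hj, rfl⟩
    omega

theorem isMinimalVEDomSet_everyFourthVertex (hn : 2 ≤ n) :
    IsMinimalVEDomSet (pathGraph n) (Fin.val ⁻¹' ↑(everyFourthVertex n)) := by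
  apply isMinimalVEDomSet_pathGraph_preimage
  · simp only [mem_everyFourthVertex]
    omega
  · intro x hx
    by_cases hend : n ≤ x + 5
    · exact ⟨n - 3, mem_everyFourthVertex.2 (Or.inr rfl), by omega, by omega⟩
    · exact ⟨4 * (x / 4) + 2, mem_everyFourthVertex.2 (Or.inl ⟨_, by omega, rfl⟩), by omega,
        by omega⟩
  · simp only [mem_everyFourthVertex]
    rintro _ (⟨i, hi, rfl⟩ | rfl)
    · refine ⟨4 * i, by omega, ?_⟩
      rintro _ (⟨j, hj, rfl⟩ | rfl) <;> omega
    · refine ⟨n - 2, by omega, ?_⟩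
      rintro _ (⟨j, hj, rfl⟩ | rfl) <;> omega

theorem not_wellVEDominated_pathGraph (h4 : 4 ≤ n) (h6 : n ≠ 6) :
    ¬ WellVEDominated (pathGraph n) := by
  intro h
  have hcard := h _ _ (isMinimalVEDomSet_everyThirdVertex (by omega))
    (isMinimalVEDomSet_everyFourthVertex (by omega))
  rw [ncard_preimage_val, ncard_preimage_val, card_everyThirdVertex,
    card_everyFourthVertex] at hcard
  · omega
  · simp only [mem_everyFourthVertex]
    omega
  · simp only [mem_everyThirdVertex]
    omega

end Path

/-- The path on `n` vertices is well-ve-dominated iff `n ∈ {1, 2, 3, 6}`. -/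
theorem stmt_5 (n : ℕ) (hn : 1 ≤ n) :
    WellVEDominated (SimpleGraph.pathGraph n) ↔
      n = 1 ∨ n = 2 ∨ n = 3 ∨ n = 6 := by
  refine ⟨fun h => ?_, ?_⟩
  · by_contra hn'
    exact not_wellVEDominated_pathGraph (by omega) (by omega) h
  · rintro (rfl | rfl | rfl | rfl)
    · exact wellVEDominated_pathGraph_of_card_eq 0 (by decide)
    · exact wellVEDominated_pathGraph_of_card_eq 1 (by decide)
    · exact wellVEDominated_pathGraph_of_card_eq 1 (by decide)
    · exact wellVEDominated_pathGraph_of_card_eq 2 (by decide)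
end

section
/- Let G be a graph containing an induced path v_1 v_2 v_3 v_4 v_5 v_6 v_7 such that the degrees in G satisfy d(v_1) = d(v_7) = 1 and d(v_2) = d(v_4) = d(v_6) = 2. Then G is not well-ve-dominated. -/
open SimpleGraph

/-!
Put `Z = N[v₃] ∪ N[v₅]`. The vertices outside `Z`, together with the vertices of `Z` other than
`v₃, v₅` whose neighborhood stays inside `Z`, dominate every vertex, so they contain a minimal
ve-dominating set `D`. Only `v₁, v₂, v₃` ve-dominate `v₁v₂`, so `v₁ ∈ D`, and likewise `v₇ ∈ D`;
`D` also contains a vertex `w` ve-dominating `v₃v₄`, which lies in `Z` and hence has `N[w] ⊆ Z`.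
Every edge ve-dominated by `v₁`, `v₇` or `w` is ve-dominated by `v₃` or `v₅`, so exchanging
`{v₁, v₇, w}` for `{v₃, v₅}` gives a smaller ve-dominating set, and a minimal one inside it.
-/

def SimpleGraph.closedNeighborSet {V : Type*} (G : SimpleGraph V) (v : V) : Set V :=
  insert v (G.neighborSet v)

section VEDomination

variable {V : Type*} {G : SimpleGraph V}

theorem SimpleGraph.self_mem_closedNeighborSet (v : V) : v ∈ G.closedNeighborSet v :=
  Set.mem_insert v _

theorem SimpleGraph.Adj.mem_closedNeighborSet {v w : V} (h : G.Adj v w) :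
    w ∈ G.closedNeighborSet v :=
  Set.mem_insert_of_mem v h

theorem SimpleGraph.neighborSet_eq_singleton_of_ncard_eq_one {a b : V} (hab : G.Adj a b)
    (h : (G.neighborSet a).ncard = 1) : G.neighborSet a = {b} := by
  obtain ⟨c, hc⟩ := Set.ncard_eq_one.1 h
  have hb : b ∈ G.neighborSet a := hab
  rw [hc, Set.mem_singleton_iff] at hb
  rw [hc, hb]

theorem SimpleGraph.neighborSet_eq_pair_of_ncard_eq_two {a b c : V} (hab : G.Adj a b)
    (hac : G.Adj a c) (hbc : b ≠ c) (h : (G.neighborSet a).ncard = 2) : G.neighborSet a = {b, c} := by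
  have hsub : ({b, c} : Set V) ⊆ G.neighborSet a :=
    Set.insert_subset hab (Set.singleton_subset_iff.2 hac)
  exact (Set.eq_of_subset_of_ncard_le hsub (by rw [h, Set.ncard_pair hbc])
    (Set.finite_of_ncard_pos (h ▸ two_pos))).symm

theorem VEDominates.exists_of_closedNeighborSet_subset {v : V} {e : Sym2 V} {T : Set V}
    (h : G.closedNeighborSet v ⊆ ⋃ t ∈ T, G.closedNeighborSet t) (hv : VEDominates G v e) :
    ∃ t ∈ T, VEDominates G t e := by
  obtain ⟨x, hxe, hxv⟩ := hv
  obtain ⟨t, ht, hxt⟩ := Set.mem_iUnion₂.1 (h hxv)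
  exact ⟨t, ht, x, hxe, hxt⟩

theorem VEDominates.of_neighborSet_eq_singleton {a b c : V} {e : Sym2 V}
    (ha : G.neighborSet a = {b}) (hcb : G.Adj c b) (he : e ∈ G.edgeSet)
    (h : VEDominates G a e) : VEDominates G c e := by
  have hb : ∀ x, G.Adj a x → x = b := fun x hx => by
    simpa [ha] using (show x ∈ G.neighborSet a from hx)
  obtain ⟨x, hxe, hxa⟩ := h
  rcases hxa with rfl | hax
  · induction e using Sym2.ind with
    | _ p q =>
      rcases Sym2.mem_iff.1 hxe with rfl | rfl
      · exact ⟨q, Sym2.mem_mk_right _ _, Or.inr (hb q he ▸ hcb)⟩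
      · exact ⟨p, Sym2.mem_mk_left _ _, Or.inr (hb p he.symm ▸ hcb)⟩
  · exact ⟨x, hxe, Or.inr (hb x hax ▸ hcb)⟩

theorem VEDominates.mem_closedNeighborSet_union {w u v : V} (h : VEDominates G w s(u, v)) :
    w ∈ G.closedNeighborSet u ∪ G.closedNeighborSet v := by
  obtain ⟨x, hx, rfl | hwx⟩ := h
  · rcases Sym2.mem_iff.1 hx with rfl | rfl
    exacts [Or.inl (self_mem_closedNeighborSet _), Or.inr (self_mem_closedNeighborSet _)]
  · rcases Sym2.mem_iff.1 hx with rfl | rfl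
    exacts [Or.inl hwx.symm.mem_closedNeighborSet, Or.inr hwx.symm.mem_closedNeighborSet]

theorem isVEDomSet_of_forall_exists_mem_closedNeighborSet {S : Set V}
    (h : ∀ x, ∃ s ∈ S, x ∈ G.closedNeighborSet s) : IsVEDomSet G S := by
  intro e _
  induction e using Sym2.ind with
  | _ x y =>
    obtain ⟨s, hs, hxs⟩ := h x
    exact ⟨s, hs, x, Sym2.mem_mk_left x y, hxs⟩

/-- Every vertex is dominated: `u` and `w` by `v`, any other vertex outside the set by one of
its neighbors outside `Z`. -/
theorem isVEDomSet_of_neighborSet_eq_pair {Z : Set V} {u v w : V}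
    (hv : G.neighborSet v = {u, w}) (hu : u ∈ Z) (hw : w ∈ Z) :
    IsVEDomSet G ({x | x ∉ Z ∨ G.neighborSet x ⊆ Z} \ {u, w}) := by
  have hvu : G.Adj v u := by simp [← mem_neighborSet, hv]
  have hvw : G.Adj v w := by simp [← mem_neighborSet, hv]
  have hvS : v ∈ {x | x ∉ Z ∨ G.neighborSet x ⊆ Z} \ {u, w} :=
    ⟨Or.inr (by simp [hv, Set.insert_subset_iff, hu, hw]), by simp [hvu.ne, hvw.ne]⟩
  refine isVEDomSet_of_forall_exists_mem_closedNeighborSet fun x => ?_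
  by_cases hx : x = u ∨ x = w
  · rcases hx with rfl | rfl
    exacts [⟨v, hvS, hvu.mem_closedNeighborSet⟩, ⟨v, hvS, hvw.mem_closedNeighborSet⟩]
  by_cases hxS : x ∈ {x | x ∉ Z ∨ G.neighborSet x ⊆ Z} \ {u, w}
  · exact ⟨x, hxS, self_mem_closedNeighborSet x⟩
  obtain ⟨y, hxy, hyZ⟩ : ∃ y, G.Adj x y ∧ y ∉ Z := by
    by_contra! h
    exact hxS ⟨Or.inr h, by simpa using hx⟩
  refine ⟨y, ⟨Or.inl hyZ, ?_⟩, hxy.symm.mem_closedNeighborSet⟩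
  rintro (rfl | rfl)
  exacts [hyZ hu, hyZ hw]

theorem IsVEDomSet.sdiff_union {D R T : Set V} (hD : IsVEDomSet G D)
    (hRT : ∀ r ∈ R, ∀ e ∈ G.edgeSet, VEDominates G r e → ∃ t ∈ T, VEDominates G t e) :
    IsVEDomSet G (D \ R ∪ T) := by
  intro e he
  obtain ⟨d, hdD, hde⟩ := hD e he
  by_cases hdR : d ∈ R
  · obtain ⟨t, htT, hte⟩ := hRT d hdR e he hde
    exact ⟨t, Or.inr htT, hte⟩
  · exact ⟨d, Or.inl ⟨hdD, hdR⟩, hde⟩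

theorem IsVEDomSet.mem_of_pendant {D : Set V} {a b c : V} (hD : IsVEDomSet G D)
    (ha : G.neighborSet a = {b}) (hb : G.neighborSet b = {a, c}) (hbD : b ∉ D)
    (hcD : c ∉ D) : a ∈ D := by
  have hab : G.Adj a b := by simp [← mem_neighborSet, ha]
  obtain ⟨d, hdD, hd⟩ := hD s(a, b) hab
  have hd' := hd.mem_closedNeighborSet_union
  simp only [closedNeighborSet, ha, hb, Set.mem_union, Set.mem_insert_iff,
    Set.mem_singleton_iff] at hd'
  rcases hd' with (rfl | rfl) | rfl | rfl | rfl
  exacts [hdD, absurd hdD hbD, absurd hdD hbD, hdD, absurd hdD hcD]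

theorem IsVEDomSet.exists_isMinimalVEDomSet_subset [Finite V] {D : Set V}
    (hD : IsVEDomSet G D) : ∃ D' ⊆ D, IsMinimalVEDomSet G D' := by
  obtain ⟨D', hD'D, hmin⟩ := exists_minimal_le_of_wellFoundedLT (IsVEDomSet G) D hD
  exact ⟨D', hD'D, hmin.prop, fun D'' hlt hD'' => hlt.not_ge (hmin.le_of_le hD'' hlt.le)⟩

theorem not_wellVEDominated_of_exchange [Finite V] {D R T : Set V}
    (hD : IsMinimalVEDomSet G D) (hRD : R ⊆ D)
    (hRT : ∀ r ∈ R, ∀ e ∈ G.edgeSet, VEDominates G r e → ∃ t ∈ T, VEDominates G t e)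
    (hcard : T.ncard < R.ncard) : ¬ WellVEDominated G := by
  intro hwell
  obtain ⟨D', hD'sub, hD'⟩ := (hD.1.sdiff_union hRT).exists_isMinimalVEDomSet_subset
  have hlt : D'.ncard < D.ncard :=
    calc D'.ncard ≤ (D \ R ∪ T).ncard := Set.ncard_le_ncard hD'sub
      _ ≤ (D \ R).ncard + T.ncard := Set.ncard_union_le _ _
      _ < (D \ R).ncard + R.ncard := by omega
      _ = D.ncard := Set.ncard_sdiff_add_ncard_of_subset hRD
  exact hlt.ne (hwell D' D hD' hD)

theorem not_wellVEDominated_of_pendant_paths [Finite V] {v₁ v₂ v₃ v₄ v₅ v₆ v₇ : V}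
    (h₁ : G.neighborSet v₁ = {v₂}) (h₂ : G.neighborSet v₂ = {v₁, v₃})
    (h₄ : G.neighborSet v₄ = {v₃, v₅}) (h₆ : G.neighborSet v₆ = {v₅, v₇})
    (h₇ : G.neighborSet v₇ = {v₆})
    (hv₁ : v₁ ∉ G.closedNeighborSet v₃ ∪ G.closedNeighborSet v₅)
    (hv₇ : v₇ ∉ G.closedNeighborSet v₃ ∪ G.closedNeighborSet v₅) (h₁₇ : v₁ ≠ v₇) :
    ¬ WellVEDominated G := by
  set Z := G.closedNeighborSet v₃ ∪ G.closedNeighborSet v₅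
  have a₂₁ : G.Adj v₂ v₁ := by simp [← mem_neighborSet, h₂]
  have a₂₃ : G.Adj v₂ v₃ := by simp [← mem_neighborSet, h₂]
  have a₆₅ : G.Adj v₆ v₅ := by simp [← mem_neighborSet, h₆]
  have a₆₇ : G.Adj v₆ v₇ := by simp [← mem_neighborSet, h₆]
  have a₄₃ : G.Adj v₄ v₃ := by simp [← mem_neighborSet, h₄]
  have hv₃Z : v₃ ∈ Z := Or.inl (self_mem_closedNeighborSet v₃)
  have hv₅Z : v₅ ∈ Z := Or.inr (self_mem_closedNeighborSet v₅)
  obtain ⟨D, hDS, hD⟩ :=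
    (isVEDomSet_of_neighborSet_eq_pair (G := G) h₄ hv₃Z hv₅Z).exists_isMinimalVEDomSet_subset
  have hDZ : ∀ x ∈ D, x ∈ Z → G.closedNeighborSet x ⊆ Z := fun x hx hxZ =>
    Set.insert_subset hxZ ((hDS hx).1.resolve_left (not_not.2 hxZ))
  have hv₁D : v₁ ∈ D := hD.1.mem_of_pendant h₁ h₂
    (fun h => hv₁ (hDZ _ h (Or.inl a₂₃.symm.mem_closedNeighborSet) a₂₁.mem_closedNeighborSet))
    (fun h => (hDS h).2 (by simp))
  have hv₇D : v₇ ∈ D := hD.1.mem_of_pendant h₇ (h₆.trans (Set.pair_comm _ _))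
    (fun h => hv₇ (hDZ _ h (Or.inr a₆₅.symm.mem_closedNeighborSet) a₆₇.mem_closedNeighborSet))
    (fun h => (hDS h).2 (by simp))
  obtain ⟨w, hwD, hw⟩ := hD.1 s(v₃, v₄) a₄₃.symm
  have hN₄ : G.closedNeighborSet v₄ ⊆ Z := by
    simp [closedNeighborSet, h₄, Set.insert_subset_iff, Z, a₄₃.symm]
  have hwZ : G.closedNeighborSet w ⊆ Z :=
    hDZ w hwD (hw.mem_closedNeighborSet_union.elim Or.inl (hN₄ ·))
  refine not_wellVEDominated_of_exchange hD (R := {v₁, v₇, w}) (T := {v₃, v₅}) ?_ ?_ ?_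
  · simp [Set.insert_subset_iff, hv₁D, hv₇D, hwD]
  · rintro r (rfl | rfl | rfl) e he hr
    · exact ⟨v₃, by simp, hr.of_neighborSet_eq_singleton h₁ a₂₃.symm he⟩
    · exact ⟨v₅, by simp, hr.of_neighborSet_eq_singleton h₇ a₆₅.symm he⟩
    · exact hr.exists_of_closedNeighborSet_subset (by simpa using hwZ)
  · have hw₁ : v₁ ≠ w := fun h => hv₁ (h ▸ hwZ (self_mem_closedNeighborSet w))
    have hw₇ : v₇ ≠ w := fun h => hv₇ (h ▸ hwZ (self_mem_closedNeighborSet w))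
    calc ({v₃, v₅} : Set V).ncard ≤ ({v₅} : Set V).ncard + 1 := Set.ncard_insert_le _ _
      _ < 3 := by simp
      _ = ({v₁, v₇, w} : Set V).ncard := (Set.ncard_eq_three.2 ⟨_, _, _, h₁₇, hw₁, hw₇, rfl⟩).symm

end VEDomination

/-- If `G` has an induced path `v₁v₂v₃v₄v₅v₆v₇` with `d(v₁) = d(v₇) = 1` and
`d(v₂) = d(v₄) = d(v₆) = 2`, then `G` is not well-ve-dominated. -/
theorem stmt_8 {V : Type*} [Fintype V] (G : SimpleGraph V)
    (f : SimpleGraph.pathGraph 7 ↪g G)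
    (hd1 : (G.neighborSet (f 0)).ncard = 1)
    (hd7 : (G.neighborSet (f 6)).ncard = 1)
    (hd2 : (G.neighborSet (f 1)).ncard = 2)
    (hd4 : (G.neighborSet (f 3)).ncard = 2)
    (hd6 : (G.neighborSet (f 5)).ncard = 2) :
    ¬ WellVEDominated G := by
  have adj : ∀ i j : Fin 7, i.val + 1 = j.val → G.Adj (f i) (f j) := fun i j h =>
    f.map_adj_iff.2 (pathGraph_adj.2 (Or.inl h))
  exact not_wellVEDominated_of_pendant_paths
    (neighborSet_eq_singleton_of_ncard_eq_one (adj 0 1 rfl) hd1)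
    (neighborSet_eq_pair_of_ncard_eq_two (adj 0 1 rfl).symm (adj 1 2 rfl) (by simp) hd2)
    (neighborSet_eq_pair_of_ncard_eq_two (adj 2 3 rfl).symm (adj 3 4 rfl) (by simp) hd4)
    (neighborSet_eq_pair_of_ncard_eq_two (adj 4 5 rfl).symm (adj 5 6 rfl) (by simp) hd6)
    (neighborSet_eq_singleton_of_ncard_eq_one (adj 5 6 rfl).symm hd7)
    (by simp [closedNeighborSet, pathGraph_adj]) (by simp [closedNeighborSet, pathGraph_adj])
    (by simp)
end

section
/- Let T be a reduced well-ve-dominated tree with at least 6 vertices such that γ_ve(T) = 2. Then T is isomorphic to the path P_6 on six vertices. -/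
open SimpleGraph

/-!
Let `v₀ ⋯ v_k` be a longest path of `T`. By maximality `v₀` is a leaf at `v₁`, and since `T` is
reduced, `v₁` has no neighbour besides `v₀` and `v₂`; symmetrically at the other end. As `T` is
well-ve-dominated with `γ_ve(T) = 2`, every minimal ve-dominating set has two elements. If some
vertex `z ∉ {v₀, v₁, v_{k-2}, v_{k-1}, v_k}` is adjacent to `v₂`, the complement of
`{v₁, v₂, v_{k-2}, v_{k-1}}` is ve-dominating, and inside it only `v₀` (resp. `v_k`) dominates
`v₀v₁` (resp. `v_{k-1}v_k`); so `{v₀, v_k}` is ve-dominating, yet it misses the edge `zv₂`.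
Hence `k ≤ 5` (otherwise take `z = v₃`) and no vertex leaves the path at `v₂` or `v_{k-2}`, so `T`
is the path itself, and `6 ≤ |V|` forces `k = 5`.
-/

namespace SimpleGraph

variable {V : Type*} {G : SimpleGraph V} {a b x : V} {p : G.Walk a b}

lemma veDominates_mk_iff {v x y : V} :
    VEDominates G v s(x, y) ↔ (x = v ∨ G.Adj v x) ∨ (y = v ∨ G.Adj v y) := by
  simp [VEDominates]

lemma isVEDomSet_univ : IsVEDomSet G Set.univ := by
  intro e _
  induction e using Sym2.ind with
  | _ x y => exact ⟨x, trivial, veDominates_mk_iff.2 (Or.inl (Or.inl rfl))⟩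

lemma isMinimalVEDomSet_iff {D : Set V} : IsMinimalVEDomSet G D ↔ Minimal (IsVEDomSet G) D :=
  Set.minimal_iff_forall_ssubset.symm

lemma gammaVE_le_ncard {D : Set V} (hD : IsVEDomSet G D) : gammaVE G ≤ D.ncard :=
  Nat.sInf_le ⟨D, hD, rfl⟩

lemma exists_isVEDomSet_ncard_eq_gammaVE : ∃ D, IsVEDomSet G D ∧ D.ncard = gammaVE G :=
  Nat.sInf_mem (s := {n | ∃ D, IsVEDomSet G D ∧ D.ncard = n})
    ⟨_, Set.univ, isVEDomSet_univ, rfl⟩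

lemma isVEDomSet_compl {S : Set V} (c : V) (hS : ∀ x ∈ S, x ≠ c → ∃ d ∉ S, G.Adj d x) :
    IsVEDomSet G Sᶜ := by
  intro e he
  induction e using Sym2.ind with
  | _ x y =>
    by_cases hx : x ∈ S
    · by_cases hy : y ∈ S
      · rcases eq_or_ne x c with rfl | hxc
        · obtain ⟨d, hd, hdy⟩ := hS y hy (G.ne_of_adj he).symm
          exact ⟨d, hd, veDominates_mk_iff.2 (Or.inr (Or.inr hdy))⟩
        · obtain ⟨d, hd, hdx⟩ := hS x hx hxc
          exact ⟨d, hd, veDominates_mk_iff.2 (Or.inl (Or.inr hdx))⟩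
      · exact ⟨y, hy, veDominates_mk_iff.2 (Or.inr (Or.inl rfl))⟩
    · exact ⟨x, hx, veDominates_mk_iff.2 (Or.inl (Or.inl rfl))⟩

section Finite

variable [Finite V]

lemma IsVEDomSet.exists_isMinimalVEDomSet_subset {D : Set V} (hD : IsVEDomSet G D) :
    ∃ D' ⊆ D, IsMinimalVEDomSet G D' := by
  simpa only [isMinimalVEDomSet_iff] using exists_minimal_le_of_wellFoundedLT _ D hD

lemma isMinimalVEDomSet_of_ncard_eq_gammaVE {D : Set V} (hD : IsVEDomSet G D)
    (h : D.ncard = gammaVE G) : IsMinimalVEDomSet G D :=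
  ⟨hD, fun _ hD' hdom =>
    (Set.ncard_lt_ncard hD' D.toFinite).not_ge (h ▸ gammaVE_le_ncard hdom)⟩

lemma WellVEDominated.ncard_eq_gammaVE (hW : WellVEDominated G) {D : Set V}
    (hD : IsMinimalVEDomSet G D) : D.ncard = gammaVE G := by
  obtain ⟨D₀, hD₀, h⟩ := exists_isVEDomSet_ncard_eq_gammaVE (G := G)
  exact (hW D D₀ hD (isMinimalVEDomSet_of_ncard_eq_gammaVE hD₀ h)).trans h

lemma WellVEDominated.isVEDomSet_pair (hW : WellVEDominated G) (hγ : gammaVE G = 2)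
    {D : Set V} (hD : IsVEDomSet G D) {a b : V} (hab : a ≠ b) {ea eb : Sym2 V}
    (hea : ea ∈ G.edgeSet) (heb : eb ∈ G.edgeSet)
    (ha : ∀ u ∈ D, VEDominates G u ea → u = a) (hb : ∀ u ∈ D, VEDominates G u eb → u = b) :
    IsVEDomSet G {a, b} := by
  obtain ⟨D', hD'D, hD'⟩ := hD.exists_isMinimalVEDomSet_subset
  have mem : ∀ {c e}, e ∈ G.edgeSet → (∀ u ∈ D, VEDominates G u e → u = c) → c ∈ D' := by
    intro c e he hc
    obtain ⟨u, hu, hue⟩ := hD'.1 e he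
    exact hc u (hD'D hu) hue ▸ hu
  have hsub : {a, b} ⊆ D' :=
    Set.insert_subset (mem hea ha) (Set.singleton_subset_iff.2 (mem heb hb))
  have hcard : D'.ncard ≤ ({a, b} : Set V).ncard := by
    rw [hW.ncard_eq_gammaVE hD', hγ, Set.ncard_pair hab]
  exact Set.eq_of_subset_of_ncard_le hsub hcard ▸ hD'.1

end Finite

lemma IsAcyclic.adj_getVert_iff (hG : G.IsAcyclic) (hp : p.IsPath) {i j : ℕ}
    (hi : i ≤ p.length) (hj : j ≤ p.length) :
    G.Adj (p.getVert i) (p.getVert j) ↔ i + 1 = j ∨ j + 1 = i := by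
  refine ⟨fun h => ?_, ?_⟩
  · wlog hij : i ≤ j generalizing i j
    · exact (this hj hi h.symm (by omega)).symm
    have hij' : i ≠ j := by rintro rfl; exact G.irrefl h
    have hmem : p.getVert j ∈ (p.drop i).support := by
      simpa [Nat.add_sub_cancel' hij] using (p.drop i).getVert_mem_support (j - i)
    have hsnd := hG.eq_snd_of_adj_start (hp.drop i) h hmem
    rw [Walk.snd, Walk.drop_getVert] at hsnd
    have := hp.getVert_injOn hj (show i + 1 ≤ p.length by omega) hsnd
    omega
  · rintro (rfl | rfl)
    · exact p.adj_getVert_succ (by omega)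
    · exact (p.adj_getVert_succ (by omega)).symm

lemma IsAcyclic.getVert_eq_of_adj_of_notMem_support (hG : G.IsAcyclic) (hp : p.IsPath)
    (hx : x ∉ p.support) {i j : ℕ} (hi : G.Adj x (p.getVert i)) (hj : G.Adj x (p.getVert j)) :
    p.getVert i = p.getVert j := by
  wlog hij : i ≤ j generalizing i j
  · exact (this hj hi (by omega)).symm
  have hq : (Walk.cons hi (p.drop i)).IsPath :=
    (Walk.cons_isPath_iff _ _).2 ⟨hp.drop i, fun h => hx ((p.isSubwalk_drop i).support_subset h)⟩
  have hmem : p.getVert j ∈ (Walk.cons hi (p.drop i)).support := by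
    simpa [Nat.add_sub_cancel' hij] using
      List.mem_cons_of_mem x ((p.drop i).getVert_mem_support (j - i))
  simpa using (hG.eq_snd_of_adj_start hq hj hmem).symm

lemma Preconnected.mem_of_adj_mem {s : Set V} (hG : G.Preconnected) {c : V} (hc : c ∈ s)
    (hs : ∀ ⦃x y⦄, y ∈ s → G.Adj x y → x ∈ s) (x : V) : x ∈ s := by
  obtain ⟨q⟩ := hG x c
  induction q with
  | nil => exact hc
  | cons h _ ih => exact hs (ih hc) h

lemma IsAcyclic.nonempty_iso_pathGraph (hG : G.IsAcyclic) (hp : p.IsPath)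
    (hsupp : ∀ x, x ∈ p.support) : Nonempty (G ≃g pathGraph (p.length + 1)) := by
  have hbij : Function.Bijective fun i : Fin (p.length + 1) => p.getVert i := by
    refine ⟨fun i j h => Fin.ext (hp.getVert_injOn (Nat.le_of_lt_succ i.2)
      (Nat.le_of_lt_succ j.2) h), fun x => ?_⟩
    obtain ⟨n, hn, hle⟩ := Walk.mem_support_iff_exists_getVert.1 (hsupp x)
    exact ⟨⟨n, by omega⟩, hn⟩
  refine ⟨Iso.symm ⟨Equiv.ofBijective _ hbij, fun {i j} => ?_⟩⟩
  simp only [Equiv.ofBijective_apply, pathGraph_adj]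
  exact hG.adj_getVert_iff hp (Nat.le_of_lt_succ i.2) (Nat.le_of_lt_succ j.2)

def IsLongestPath (p : G.Walk a b) : Prop :=
  p.IsPath ∧ ∀ ⦃x y : V⦄ (q : G.Walk x y), q.IsPath → q.length ≤ p.length

lemma exists_isLongestPath [Fintype V] [Nonempty V] (G : SimpleGraph V) :
    ∃ (a b : V) (p : G.Walk a b), IsLongestPath p := by
  obtain ⟨c⟩ := ‹Nonempty V›
  let S : Set ℕ := {n | ∃ (x y : V) (q : G.Walk x y), q.IsPath ∧ q.length = n}
  have hbdd : BddAbove S := ⟨Fintype.card V, by rintro _ ⟨x, y, q, hq, rfl⟩; exact hq.length_lt.le⟩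
  obtain ⟨a, b, p, hp, hlen⟩ : sSup S ∈ S :=
    Nat.sSup_mem ⟨0, c, c, Walk.nil, Walk.IsPath.nil, rfl⟩ hbdd
  exact ⟨a, b, p, hp, fun x y q hq => hlen ▸ le_csSup hbdd ⟨x, y, q, hq, rfl⟩⟩

namespace IsLongestPath

lemma reverse (hp : IsLongestPath p) : IsLongestPath p.reverse :=
  ⟨hp.1.reverse, by simpa using hp.2⟩

lemma mem_support_of_adj_start (hp : IsLongestPath p) (h : G.Adj x a) : x ∈ p.support := by
  by_contra hx
  simpa using hp.2 _ ((Walk.cons_isPath_iff h p).2 ⟨hp.1, hx⟩)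

lemma eq_getVert_one_of_adj_start (hG : G.IsAcyclic) (hp : IsLongestPath p) (h : G.Adj x a) :
    x = p.getVert 1 :=
  hG.eq_snd_of_adj_start hp.1 h.symm (hp.mem_support_of_adj_start h)

/-- Off the path, a neighbour of `p.getVert 1` would be a leaf twin of the endpoint `a`. -/
lemma mem_support_of_adj_getVert_one (hG : G.IsAcyclic) (hred : Reduced G)
    (hp : IsLongestPath p) (hk : 1 ≤ p.length) (h : G.Adj x (p.getVert 1)) : x ∈ p.support := by
  by_contra hx
  have hxw : ∀ w, G.Adj x w → w = p.getVert 1 := by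
    intro w hw
    by_cases hw' : w ∈ p.support
    · obtain ⟨j, rfl, -⟩ := Walk.mem_support_iff_exists_getVert.1 hw'
      exact hG.getVert_eq_of_adj_of_notMem_support hp.1 hx hw h
    · have hq : (Walk.cons hw.symm (Walk.cons h (p.drop 1))).IsPath := by
        simp only [Walk.cons_isPath_iff, Walk.support_cons, List.mem_cons, not_or]
        exact ⟨⟨hp.1.drop 1, fun h' => hx ((p.isSubwalk_drop 1).support_subset h')⟩,
          hw.ne.symm, fun h' => hw' ((p.isSubwalk_drop 1).support_subset h')⟩
      have := hp.2 _ hq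
      simp only [Walk.length_cons, Walk.drop_length] at this
      omega
  have hxa : x = a := hred x a <| Set.ext fun w => by
    simp only [mem_neighborSet]
    refine ⟨fun hw => ?_, fun hw => ?_⟩
    · simpa [hxw w hw] using p.adj_getVert_succ hk
    · exact hp.eq_getVert_one_of_adj_start hG hw.symm ▸ h
  exact hx (hxa ▸ p.start_mem_support)

lemma veDominates_start (hG : G.IsAcyclic) (hp : IsLongestPath p) {x y : V}
    (h : VEDominates G a s(x, y)) : x = a ∨ x = p.getVert 1 ∨ y = a ∨ y = p.getVert 1 := by
  rcases veDominates_mk_iff.1 h with (h | h) | (h | h)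
  · exact Or.inl h
  · exact Or.inr (Or.inl (hp.eq_getVert_one_of_adj_start hG h.symm))
  · exact Or.inr (Or.inr (Or.inl h))
  · exact Or.inr (Or.inr (Or.inr (hp.eq_getVert_one_of_adj_start hG h.symm)))

lemma veDominates_start_edge (hG : G.IsAcyclic) (hred : Reduced G) (hp : IsLongestPath p)
    (hk : 1 ≤ p.length) {u : V} (h : VEDominates G u s(a, p.getVert 1)) :
    u = a ∨ u = p.getVert 1 ∨ u = p.getVert 2 := by
  rcases veDominates_mk_iff.1 h with (h | h) | (h | h)
  · exact Or.inl h.symm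
  · exact Or.inr (Or.inl (hp.eq_getVert_one_of_adj_start hG h))
  · exact Or.inr (Or.inl h.symm)
  · obtain ⟨j, rfl, hj⟩ :=
      Walk.mem_support_iff_exists_getVert.1 (hp.mem_support_of_adj_getVert_one hG hred hk h)
    rcases (hG.adj_getVert_iff hp.1 hj hk).1 h with h | h
    · exact Or.inl (by simp [show j = 0 by omega])
    · exact Or.inr (Or.inr (by rw [← h]))

section Finite

variable [Finite V]

lemma isVEDomSet_endpoints (hG : G.IsAcyclic) (hred : Reduced G) (hW : WellVEDominated G)
    (hγ : gammaVE G = 2) (hp : IsLongestPath p) (hk : 4 ≤ p.length) {z : V}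
    (hz : ∀ i ≤ p.length, (i ≤ 1 ∨ p.length - 2 ≤ i) → z ≠ p.getVert i)
    (hz2 : G.Adj z (p.getVert 2)) : IsVEDomSet G {a, b} := by
  have hne : ∀ {i j}, i ≤ p.length → j ≤ p.length → i ≠ j → p.getVert i ≠ p.getVert j :=
    fun hi hj => hp.1.getVert_injOn.ne hi hj
  have hrev : ∀ i, p.reverse.getVert i = p.getVert (p.length - i) := p.getVert_reverse
  set S : Set V := {p.getVert 1, p.getVert 2, p.getVert (p.length - 2), p.getVert (p.length - 1)}
  have hmemS : ∀ {x}, x ∈ S ↔ x = p.getVert 1 ∨ x = p.getVert 2 ∨ x = p.getVert (p.length - 2) ∨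
      x = p.getVert (p.length - 1) := by
    simp [S]
  have hnotS : ∀ i ≤ p.length, i ≠ 1 → i ≠ 2 → i ≠ p.length - 2 → i ≠ p.length - 1 →
      p.getVert i ∉ S := by
    intro i hi h1 h2 h3 h4
    rw [hmemS]
    rintro (h | h | h | h) <;> exact hne hi (by omega) (by assumption) h
  have hzS : z ∉ S := by
    rw [hmemS]
    rintro (h | h | h | h)
    · exact hz 1 (by omega) (by omega) h
    · exact G.ne_of_adj hz2 h
    · exact hz _ (by omega) (by omega) h
    · exact hz _ (by omega) (by omega) h
  have hS : ∀ x ∈ S, x ≠ p.getVert (p.length - 2) → ∃ d ∉ S, G.Adj d x := by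
    intro x hx hx'
    rcases hmemS.1 hx with rfl | rfl | h | rfl
    · exact ⟨a, by simpa using hnotS 0 (by omega) (by omega) (by omega) (by omega) (by omega),
        by simpa using p.adj_getVert_succ (i := 0) (by omega)⟩
    · exact ⟨z, hzS, hz2⟩
    · exact absurd h hx'
    · exact ⟨b, by simpa using hnotS _ le_rfl (by omega) (by omega) (by omega) (by omega),
        by simpa [hrev] using p.reverse.adj_getVert_succ (i := 0) (by simp; omega)⟩
  refine hW.isVEDomSet_pair hγ (isVEDomSet_compl _ hS) (ea := s(a, p.getVert 1))
    (eb := s(b, p.reverse.getVert 1))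
    (fun h => hne (i := 0) (by omega) le_rfl (by omega) (by simpa using h)) ?_ ?_ ?_ ?_
  · simpa using p.adj_getVert_succ (i := 0) (by omega)
  · simpa using p.reverse.adj_getVert_succ (i := 0) (by simp; omega)
  · intro u hu h
    rcases hp.veDominates_start_edge hG hred (by omega) h with h | h | h
    · exact h
    · exact absurd (hmemS.2 (Or.inl h)) hu
    · exact absurd (hmemS.2 (Or.inr (Or.inl h))) hu
  · intro u hu h
    rcases hp.reverse.veDominates_start_edge hG hred (by simp; omega) h with h | h | h
    · exact h
    · exact absurd (hmemS.2 (Or.inr (Or.inr (Or.inr (h.trans (hrev 1)))))) hu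
    · exact absurd (hmemS.2 (Or.inr (Or.inr (Or.inl (h.trans (hrev 2)))))) hu

lemma not_adj_getVert_two (hG : G.IsAcyclic) (hred : Reduced G) (hW : WellVEDominated G)
    (hγ : gammaVE G = 2) (hp : IsLongestPath p) (hk : 4 ≤ p.length) {z : V}
    (hz : ∀ i ≤ p.length, (i ≤ 1 ∨ p.length - 2 ≤ i) → z ≠ p.getVert i) :
    ¬ G.Adj z (p.getVert 2) := by
  intro hz2
  have hne : ∀ {i j}, i ≤ p.length → j ≤ p.length → i ≠ j → p.getVert i ≠ p.getVert j :=
    fun hi hj => hp.1.getVert_injOn.ne hi hj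
  have ha : a = p.getVert 0 := p.getVert_zero.symm
  have hb : b = p.getVert p.length := p.getVert_length.symm
  have hb' : p.reverse.getVert 1 = p.getVert (p.length - 1) := p.getVert_reverse 1
  obtain ⟨u, hu, hdom⟩ :=
    hp.isVEDomSet_endpoints hG hred hW hγ hk hz hz2 s(z, p.getVert 2) hz2
  rcases hu with rfl | rfl
  · rcases hp.veDominates_start hG hdom with h | h | h | h
    · exact hz 0 (by omega) (by omega) (h.trans ha)
    · exact hz 1 (by omega) (by omega) h
    · exact hne (by omega) (by omega) (by omega) (h.trans ha)
    · exact hne (by omega) (by omega) (by omega) h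
  · rcases hp.reverse.veDominates_start hG hdom with h | h | h | h
    · exact hz p.length le_rfl (by omega) (h.trans hb)
    · exact hz (p.length - 1) (by omega) (by omega) (h.trans hb')
    · exact hne (by omega) (by omega) (by omega) (h.trans hb)
    · exact hne (by omega) (by omega) (by omega) (h.trans hb')

lemma length_le_five (hG : G.IsAcyclic) (hred : Reduced G) (hW : WellVEDominated G)
    (hγ : gammaVE G = 2) (hp : IsLongestPath p) : p.length ≤ 5 := by
  by_contra! hk
  refine hp.not_adj_getVert_two hG hred hW hγ (by omega) (z := p.getVert 3)
    (fun i hi _ => hp.1.getVert_injOn.ne (show 3 ≤ p.length by omega) hi (by omega)) ?_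
  exact (hG.adj_getVert_iff hp.1 (by omega) (by omega)).2 (Or.inr rfl)

lemma not_adj_getVert_of_notMem_support (hG : G.IsAcyclic) (hred : Reduced G)
    (hW : WellVEDominated G) (hγ : gammaVE G = 2) (hp : IsLongestPath p) (hx : x ∉ p.support)
    {i : ℕ} (hik : i ≤ p.length) (hi : i ≤ 1 ∨ i = 2 ∧ 4 ≤ p.length) :
    ¬ G.Adj x (p.getVert i) := by
  intro h
  rcases hi with hi | ⟨rfl, hk⟩
  · interval_cases i
    · exact hx (hp.mem_support_of_adj_start (by simpa using h))
    · exact hx (hp.mem_support_of_adj_getVert_one hG hred hik h)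
  · exact hp.not_adj_getVert_two hG hred hW hγ hk (z := x)
      (fun j _ _ hj => hx (hj ▸ p.getVert_mem_support j)) h

lemma mem_support_of_adj (hG : G.IsAcyclic) (hred : Reduced G) (hW : WellVEDominated G)
    (hγ : gammaVE G = 2) (hp : IsLongestPath p) {y : V} (hy : y ∈ p.support) (h : G.Adj x y) :
    x ∈ p.support := by
  have hk := hp.length_le_five hG hred hW hγ
  obtain ⟨i, rfl, hi⟩ := Walk.mem_support_iff_exists_getVert.1 hy
  by_contra hx
  by_cases hi' : i ≤ 1 ∨ i = 2 ∧ 4 ≤ p.length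
  · exact hp.not_adj_getVert_of_notMem_support hG hred hW hγ hx hi hi' h
  · refine hp.reverse.not_adj_getVert_of_notMem_support hG hred hW hγ (by simpa using hx)
      (i := p.length - i) (by simp) (by simp; omega) ?_
    rwa [Walk.getVert_reverse, Nat.sub_sub_self hi]

end Finite

end IsLongestPath

end SimpleGraph

/-- A reduced well-ve-dominated tree on at least 6 vertices with
`γ_ve(T) = 2` is isomorphic to the path `P₆`. -/
theorem stmt_12 {V : Type*} [Fintype V] (T : SimpleGraph V) (hT : T.IsTree)
    (hred : Reduced T) (hW : WellVEDominated T)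
    (hcard : 6 ≤ Fintype.card V) (hgamma : gammaVE T = 2) :
    Nonempty (T ≃g SimpleGraph.pathGraph 6) := by
  have := hT.connected.nonempty
  obtain ⟨a, b, p, hp⟩ := exists_isLongestPath T
  obtain ⟨e⟩ := hT.isAcyclic.nonempty_iso_pathGraph hp.1 <|
    hT.connected.preconnected.mem_of_adj_mem p.start_mem_support
      fun _ _ hy h => hp.mem_support_of_adj hT.isAcyclic hred hW hgamma hy h
  have hk : p.length = 5 := by
    have := Fintype.card_congr e.toEquiv
    have := hp.length_le_five hT.isAcyclic hred hW hgamma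
    simp only [Fintype.card_fin] at *
    omega
  rw [hk] at e
  exact ⟨e⟩
end

section
/- Let R be any tree on n ≥ 2 vertices, and let T be the tree obtained from R by attaching, to each vertex w of R, a new pendant path w–s_w–ℓ_w of length 2 (where s_w and ℓ_w are new vertices, with edges w s_w and s_w ℓ_w). Then T is a reduced well-ve-dominated tree on 3n vertices, γ_ve(T) = n, W_T equals the vertex set of R, and the subgraph of T induced by W_T is isomorphic to R. -/
open SimpleGraph

/-- The tree obtained from `R` by attaching a pendant path `w - s_w - ℓ_w`
of length 2 at every vertex `w` of `R`.  Vertices `Sum.inl w` are the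
original vertices of `R`, `Sum.inr (Sum.inl w) = s_w` and
`Sum.inr (Sum.inr w) = ℓ_w` are the new vertices. -/
def attachUnits {V : Type*} (R : SimpleGraph V) : SimpleGraph (V ⊕ V ⊕ V) :=
  SimpleGraph.fromRel (fun a b =>
    (∃ w w', a = Sum.inl w ∧ b = Sum.inl w' ∧ R.Adj w w') ∨
    (∃ w, a = Sum.inl w ∧ b = Sum.inr (Sum.inl w)) ∨
    (∃ w, a = Sum.inr (Sum.inl w) ∧ b = Sum.inr (Sum.inr w)))

/-!
The edge `s_w ℓ_w` is ve-dominated exactly by the three vertices `w, s_w, ℓ_w` of its pendant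
path, so every ve-dominating set meets each of these `n` disjoint triples, while the supports
`s_w` alone dominate everything. Within a triple the sets of edges dominated by `ℓ_w`, `s_w`, `w`
increase, so a minimal ve-dominating set meets every triple exactly once and has `n` elements.
`T` is a tree because it is connected with `|E(R)| + 2n = 3n - 1` edges.
-/

section VEDomination

variable {W : Type*} {G : SimpleGraph W}

def VEDominatesLE (G : SimpleGraph W) (x y : W) : Prop :=
  ∀ e ∈ G.edgeSet, VEDominates G x e → VEDominates G y e

theorem VEDominatesLE.trans {x y z : W} (hxy : VEDominatesLE G x y) (hyz : VEDominatesLE G y z) :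
    VEDominatesLE G x z :=
  fun e he h => hyz e he (hxy e he h)

theorem IsMinimalVEDomSet.eq_of_veDominatesLE {D : Set W} (hD : IsMinimalVEDomSet G D)
    {x y : W} (hx : x ∈ D) (hy : y ∈ D) (hxy : VEDominatesLE G x y) : x = y := by
  by_contra hne
  refine hD.2 (D \ {x}) (Set.sdiff_singleton_ssubset.2 hx) fun e he => ?_
  obtain ⟨v, hvD, hv⟩ := hD.1 e he
  by_cases hvx : v = x
  · exact ⟨y, ⟨hy, Ne.symm hne⟩, hxy e he (hvx ▸ hv)⟩
  · exact ⟨v, ⟨hvD, hvx⟩, hv⟩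

theorem SimpleGraph.sum_ncard_neighborSet [Fintype W] (G : SimpleGraph W) :
    ∑ v, (G.neighborSet v).ncard = 2 * Nat.card G.edgeSet := by
  classical
  simp_rw [← Nat.card_coe_set_eq, Nat.card_eq_fintype_card, card_neighborSet_eq_degree,
    sum_degrees_eq_twice_card_edges, edgeFinset_card]

end VEDomination

section AttachUnits

variable {V : Type*} {R : SimpleGraph V} {w w' : V}

@[simp] theorem attachUnits_adj_inl_inl :
    (attachUnits R).Adj (Sum.inl w) (Sum.inl w') ↔ R.Adj w w' := by
  simp only [attachUnits, fromRel_adj]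
  grind [SimpleGraph.Adj.ne, SimpleGraph.adj_comm]

@[simp] theorem attachUnits_adj_inl_inr_inl :
    (attachUnits R).Adj (Sum.inl w) (Sum.inr (Sum.inl w')) ↔ w = w' := by
  simp [attachUnits, eq_comm]

@[simp] theorem attachUnits_adj_inr_inl_inl :
    (attachUnits R).Adj (Sum.inr (Sum.inl w)) (Sum.inl w') ↔ w = w' := by
  simp [attachUnits, eq_comm]

@[simp] theorem attachUnits_not_adj_inl_inr_inr :
    ¬ (attachUnits R).Adj (Sum.inl w) (Sum.inr (Sum.inr w')) := by
  simp [attachUnits]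

@[simp] theorem attachUnits_not_adj_inr_inr_inl :
    ¬ (attachUnits R).Adj (Sum.inr (Sum.inr w)) (Sum.inl w') := by
  simp [attachUnits]

@[simp] theorem attachUnits_not_adj_inr_inl_inr_inl :
    ¬ (attachUnits R).Adj (Sum.inr (Sum.inl w)) (Sum.inr (Sum.inl w')) := by
  simp [attachUnits]

@[simp] theorem attachUnits_adj_inr_inl_inr_inr :
    (attachUnits R).Adj (Sum.inr (Sum.inl w)) (Sum.inr (Sum.inr w')) ↔ w = w' := by
  simp [attachUnits, eq_comm]

@[simp] theorem attachUnits_adj_inr_inr_inr_inl :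
    (attachUnits R).Adj (Sum.inr (Sum.inr w)) (Sum.inr (Sum.inl w')) ↔ w = w' := by
  simp [attachUnits, eq_comm]

@[simp] theorem attachUnits_not_adj_inr_inr_inr_inr :
    ¬ (attachUnits R).Adj (Sum.inr (Sum.inr w)) (Sum.inr (Sum.inr w')) := by
  simp [attachUnits]

theorem attachUnits_neighborSet_inl (w : V) :
    (attachUnits R).neighborSet (Sum.inl w) =
      Sum.inl '' R.neighborSet w ∪ {Sum.inr (Sum.inl w)} := by
  ext (u | u | u) <;> simp [eq_comm]

theorem attachUnits_neighborSet_inr_inl (w : V) :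
    (attachUnits R).neighborSet (Sum.inr (Sum.inl w)) =
      {Sum.inl w, Sum.inr (Sum.inr w)} := by
  ext (u | u | u) <;> simp [eq_comm]

theorem attachUnits_neighborSet_inr_inr (w : V) :
    (attachUnits R).neighborSet (Sum.inr (Sum.inr w)) = {Sum.inr (Sum.inl w)} := by
  ext (u | u | u) <;> simp [eq_comm]

theorem attachUnits_ncard_neighborSet_inl [Finite V] (w : V) :
    ((attachUnits R).neighborSet (Sum.inl w)).ncard = (R.neighborSet w).ncard + 1 := by
  rw [attachUnits_neighborSet_inl, Set.ncard_union_eq (Set.disjoint_singleton_right.2 (by simp)),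
    Set.ncard_image_of_injective _ Sum.inl_injective, Set.ncard_singleton]

theorem attachUnits_ncard_neighborSet_inr_inl (w : V) :
    ((attachUnits R).neighborSet (Sum.inr (Sum.inl w))).ncard = 2 := by
  rw [attachUnits_neighborSet_inr_inl, Set.ncard_pair (by simp)]

theorem attachUnits_ncard_neighborSet_inr_inr (w : V) :
    ((attachUnits R).neighborSet (Sum.inr (Sum.inr w))).ncard = 1 := by
  rw [attachUnits_neighborSet_inr_inr, Set.ncard_singleton]

theorem attachUnits_card_edgeSet [Fintype V] :
    Nat.card (attachUnits R).edgeSet = Nat.card R.edgeSet + 2 * Fintype.card V := by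
  have h := (attachUnits R).sum_ncard_neighborSet
  simp only [Fintype.sum_sum_type, attachUnits_ncard_neighborSet_inl,
    attachUnits_ncard_neighborSet_inr_inl, attachUnits_ncard_neighborSet_inr_inr,
    Finset.sum_add_distrib, R.sum_ncard_neighborSet, Finset.sum_const, Finset.card_univ,
    smul_eq_mul] at h
  omega

@[simp] def unitOf : V ⊕ V ⊕ V → V
  | .inl w => w
  | .inr (.inl w) => w
  | .inr (.inr w) => w

variable (R) in
def inlEmbedding : R ↪g attachUnits R := ⟨Function.Embedding.inl, attachUnits_adj_inl_inl⟩

theorem attachUnits_reachable_inl_unitOf (x : V ⊕ V ⊕ V) :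
    (attachUnits R).Reachable x (Sum.inl (unitOf x)) := by
  rcases x with w | w | w
  · rfl
  · exact (attachUnits_adj_inr_inl_inl.2 rfl).reachable
  · exact (attachUnits_adj_inr_inr_inr_inl.2 rfl).reachable.trans
      (attachUnits_adj_inr_inl_inl.2 rfl).reachable

theorem SimpleGraph.Connected.attachUnits (hR : R.Connected) : (attachUnits R).Connected := by
  have := hR.nonempty
  refine Connected.mk fun x y => ?_
  exact (attachUnits_reachable_inl_unitOf x).trans <|
    ((hR.preconnected _ _).map (inlEmbedding R).toHom).trans
      (attachUnits_reachable_inl_unitOf y).symm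

theorem SimpleGraph.IsTree.attachUnits [Fintype V] (hR : R.IsTree) : (attachUnits R).IsTree := by
  obtain ⟨hconn, hcard⟩ := isTree_iff_connected_and_card.1 hR
  rw [Nat.card_eq_fintype_card (α := V)] at hcard
  rw [isTree_iff_connected_and_card, attachUnits_card_edgeSet, Nat.card_sum, Nat.card_sum,
    Nat.card_eq_fintype_card (α := V)]
  exact ⟨hconn.attachUnits, by omega⟩

theorem attachUnits_reduced (hR : ∀ w, ¬ R.IsIsolated w) : Reduced (attachUnits R) := by
  intro x y hxy
  have hadj (z) : (attachUnits R).Adj x z ↔ (attachUnits R).Adj y z := Set.ext_iff.1 hxy z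
  have hnb (w) : ∃ t, R.Adj w t := not_forall_not.1 (hR w)
  rcases x with u | u | u <;> rcases y with v | v | v
  all_goals first
    | simpa [eq_comm] using hadj (Sum.inr (Sum.inl u))
    | simpa [eq_comm] using hadj (Sum.inr (Sum.inl v))
    | simpa [eq_comm] using hadj (Sum.inr (Sum.inr u))
    | simpa using hadj (Sum.inl u)
    | obtain ⟨t, ht⟩ := hnb u; simpa [ht] using hadj (Sum.inl t)
    | obtain ⟨t, ht⟩ := hnb v; simpa [ht] using hadj (Sum.inl t)

theorem attachUnits_isGoodPendant_iff [Finite V] (hR : ∀ w, ¬ R.IsIsolated w)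
    {s l : V ⊕ V ⊕ V} :
    IsGoodPendant (attachUnits R) s l ↔
      ∃ w, s = Sum.inr (Sum.inl w) ∧ l = Sum.inr (Sum.inr w) := by
  constructor
  · rintro ⟨hsl, hl, -⟩
    rcases l with w | w | w
    · have hw : 0 < (R.neighborSet w).ncard :=
        (Set.ncard_pos (Set.toFinite _)).2 (Set.nonempty_iff_ne_empty.2 (by simpa using hR w))
      rw [attachUnits_ncard_neighborSet_inl] at hl
      omega
    · rw [attachUnits_ncard_neighborSet_inr_inl] at hl
      omega
    · rcases s with v | v | v <;> simp only [attachUnits_not_adj_inl_inr_inr,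
        attachUnits_adj_inr_inl_inr_inr, attachUnits_not_adj_inr_inr_inr_inr] at hsl
      exact ⟨w, by rw [hsl], rfl⟩
  · rintro ⟨w, rfl, rfl⟩
    exact ⟨by simp, attachUnits_ncard_neighborSet_inr_inr w,
      attachUnits_ncard_neighborSet_inr_inl w⟩

theorem attachUnits_goodW [Finite V] (hR : ∀ w, ¬ R.IsIsolated w) :
    goodW (attachUnits R) = Set.range Sum.inl := by
  ext (u | u | u) <;> simp [goodW, goodSupports, goodLeaves, attachUnits_isGoodPendant_iff hR]

theorem attachUnits_veDominates_inr_inl_inr_inr_iff (v : V ⊕ V ⊕ V) (w : V) :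
    VEDominates (attachUnits R) v s(Sum.inr (Sum.inl w), Sum.inr (Sum.inr w)) ↔
      unitOf v = w := by
  rcases v with u | u | u <;> simp [VEDominates, eq_comm]

theorem attachUnits_veDominates_of_mem {a : V ⊕ V ⊕ V} {e : Sym2 (V ⊕ V ⊕ V)} (ha : a ∈ e) :
    VEDominates (attachUnits R) (Sum.inr (Sum.inl (unitOf a))) e := by
  refine ⟨a, ha, ?_⟩
  rcases a with u | u | u <;> simp

theorem attachUnits_veDominatesLE_inr_inr_inr_inl (w : V) :
    VEDominatesLE (attachUnits R) (Sum.inr (Sum.inr w)) (Sum.inr (Sum.inl w)) := by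
  rintro e - ⟨x, hx, rfl | h⟩
  · exact ⟨_, hx, by simp⟩
  rcases x with u | u | u <;> simp at h
  subst h
  exact ⟨_, hx, .inl rfl⟩

/-- The closed neighbourhood of `s_w` exceeds that of `w` only by `ℓ_w`,
whose one edge also contains `s_w`. -/
theorem attachUnits_veDominatesLE_inr_inl_inl (w : V) :
    VEDominatesLE (attachUnits R) (Sum.inr (Sum.inl w)) (Sum.inl w) := by
  rintro e he ⟨x, hx, rfl | h⟩
  · exact ⟨_, hx, by simp⟩
  rcases x with u | u | u <;> simp at h <;> subst h
  · exact ⟨_, hx, .inl rfl⟩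
  · obtain ⟨y, rfl⟩ := Sym2.mem_iff_exists.1 hx
    rcases y with v | v | v <;> simp at he
    subst he
    exact ⟨_, Sym2.mem_mk_right _ _, .inr (by simp)⟩

theorem attachUnits_veDominatesLE_total {x y : V ⊕ V ⊕ V} (hxy : unitOf x = unitOf y) :
    VEDominatesLE (attachUnits R) x y ∨ VEDominatesLE (attachUnits R) y x := by
  rcases x with u | u | u <;> rcases y with v | v | v <;> simp only [unitOf] at hxy <;> subst hxy
  all_goals
    have hls := attachUnits_veDominatesLE_inr_inr_inr_inl (R := R) u
    have hsw := attachUnits_veDominatesLE_inr_inl_inl (R := R) u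
    first
      | exact .inl fun _ _ => id
      | exact .inl hls | exact .inr hls
      | exact .inl hsw | exact .inr hsw
      | exact .inl (hls.trans hsw) | exact .inr (hls.trans hsw)

theorem IsVEDomSet.image_unitOf {D : Set (V ⊕ V ⊕ V)} (hD : IsVEDomSet (attachUnits R) D) :
    unitOf '' D = Set.univ := by
  refine Set.eq_univ_of_forall fun w => ?_
  obtain ⟨v, hv, hdom⟩ := hD _ (by simp : s(Sum.inr (Sum.inl w), Sum.inr (Sum.inr w)) ∈ _)
  exact ⟨v, hv, (attachUnits_veDominates_inr_inl_inr_inr_iff v w).1 hdom⟩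

theorem IsMinimalVEDomSet.injOn_unitOf {D : Set (V ⊕ V ⊕ V)}
    (hD : IsMinimalVEDomSet (attachUnits R) D) : Set.InjOn unitOf D := by
  intro x hx y hy hxy
  rcases attachUnits_veDominatesLE_total hxy with h | h
  · exact hD.eq_of_veDominatesLE hx hy h
  · exact (hD.eq_of_veDominatesLE hy hx h).symm

theorem IsVEDomSet.card_le_ncard [Finite V] {D : Set (V ⊕ V ⊕ V)}
    (hD : IsVEDomSet (attachUnits R) D) : Nat.card V ≤ D.ncard := by
  calc Nat.card V = (unitOf '' D).ncard := by rw [hD.image_unitOf, Set.ncard_univ]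
    _ ≤ D.ncard := Set.ncard_image_le (Set.toFinite D)

theorem IsMinimalVEDomSet.ncard_eq [Finite V] {D : Set (V ⊕ V ⊕ V)}
    (hD : IsMinimalVEDomSet (attachUnits R) D) : D.ncard = Nat.card V := by
  rw [← hD.injOn_unitOf.ncard_image, hD.1.image_unitOf, Set.ncard_univ]

theorem wellVEDominated_attachUnits [Finite V] : WellVEDominated (attachUnits R) :=
  fun _ _ h₁ h₂ => by rw [h₁.ncard_eq, h₂.ncard_eq]

theorem isVEDomSet_range_inr_inl :
    IsVEDomSet (attachUnits R) (Set.range fun w : V => Sum.inr (Sum.inl w)) := by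
  intro e _
  exact ⟨_, ⟨unitOf e.out.1, rfl⟩, attachUnits_veDominates_of_mem e.out_fst_mem⟩

theorem gammaVE_attachUnits [Finite V] : gammaVE (attachUnits R) = Nat.card V := by
  have hS := isVEDomSet_range_inr_inl (R := R)
  have hcard : (Set.range fun w : V => (Sum.inr (Sum.inl w) : V ⊕ V ⊕ V)).ncard = Nat.card V :=
    Set.ncard_range_of_injective fun _ _ h => by simpa using h
  refine le_antisymm (Nat.sInf_le ⟨_, hS, hcard⟩) (le_csInf ⟨_, _, hS, hcard⟩ ?_)
  rintro _ ⟨D, hD, rfl⟩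
  exact hD.card_le_ncard

end AttachUnits

/-- Attaching a pendant path of length 2 to every vertex of an arbitrary tree
`R` on `n ≥ 2` vertices yields a reduced well-ve-dominated tree `T` on `3n`
vertices with `γ_ve(T) = n`, whose set `W_T` is the vertex set of `R` and
whose induced subgraph on `W_T` is isomorphic to `R`. -/
theorem stmt_16 {V : Type*} [Fintype V] (R : SimpleGraph V) (hR : R.IsTree)
    (hn : 2 ≤ Fintype.card V) :
    (attachUnits R).IsTree ∧
    Reduced (attachUnits R) ∧
    WellVEDominated (attachUnits R) ∧
    Fintype.card (V ⊕ V ⊕ V) = 3 * Fintype.card V ∧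
    gammaVE (attachUnits R) = Fintype.card V ∧
    goodW (attachUnits R) = Set.range Sum.inl ∧
    Nonempty (((attachUnits R).induce (Set.range Sum.inl)) ≃g R) := by
  have : Nontrivial V := Fintype.one_lt_card_iff_nontrivial.1 hn
  have hnotIsolated : ∀ w, ¬ R.IsIsolated w := hR.connected.preconnected.not_isIsolated
  refine ⟨hR.attachUnits, attachUnits_reduced hnotIsolated, wellVEDominated_attachUnits, ?_,
    ?_, attachUnits_goodW hnotIsolated, ⟨(inlEmbedding R).isoInduceRange.symm⟩⟩
  · simp only [Fintype.card_sum]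
    ring
  · rw [gammaVE_attachUnits, Nat.card_eq_fintype_card]
end
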